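/- Let d ≥ 1, α ∈ (0,1), |λ₁| > 0, M > 0, and suppose b̄ : [t₀,∞) → (0,∞) satisfies -b̄'(t) - M b̄(t)^{2α/(d+2α)+1} - |λ₁| b̄(t) = 0 and b̄(t) ≤ 2^{(d+2α)/(2α)} B̄ for t ≥ t₀. Let φ₁ satisfy φ₁(x) ≥ min φ₁ > 0, and let ā ≥ (min φ₁)⁻¹ (1 + 2 B̄^{2α/(d+2α)} M |λ₁|⁻¹). Then for every t ≥ t₀ and x ∈ ℝᵈ, the expression Ē(x,t) := -b̄'(t)|x|^{d+2α} - M b̄(t)^{2α/(d+2α)} (|λ₁|⁻¹ + b̄(t)|x|^{d+2α}) - |λ₁|(|λ₁|⁻¹ + b̄(t)|x|^{d+2α}) + ā φ₁(x) is ≥ 0. -/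
import Mathlib


/-- nonnegativity of the bracketed expression in the supersolution
computation. Here `lam` plays the role of |λ₁| > 0. -/
theorem stmt_8 (d : ℕ) (hd : 1 ≤ d) (α lam M Bbar abar m t₀ : ℝ)
    (hα : α ∈ Set.Ioo (0:ℝ) 1) (hlam : 0 < lam) (hM : 0 < M) (hBbar : 0 < Bbar)
    (bbar : ℝ → ℝ) (hbpos : ∀ t : ℝ, t₀ ≤ t → 0 < bbar t)
    (hODE : ∀ t : ℝ, t₀ ≤ t → HasDerivAt bbar
        (-(M * (bbar t) ^ (2 * α / ((d : ℝ) + 2 * α) + 1)) - lam * bbar t) t)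
    (hbB : ∀ t : ℝ, t₀ ≤ t →
        bbar t ≤ (2 : ℝ) ^ (((d : ℝ) + 2 * α) / (2 * α)) * Bbar)
    (φ₁ : EuclideanSpace ℝ (Fin d) → ℝ) (hm : 0 < m)
    (hφ : ∀ x, m ≤ φ₁ x)
    (habar : abar ≥ m⁻¹ * (1 + 2 * Bbar ^ (2 * α / ((d : ℝ) + 2 * α)) * M * lam⁻¹)) :
    ∀ (t : ℝ), t₀ ≤ t → ∀ x : EuclideanSpace ℝ (Fin d),
      -(deriv bbar t) * ‖x‖ ^ ((d : ℝ) + 2 * α)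
        - M * (bbar t) ^ (2 * α / ((d : ℝ) + 2 * α))
            * (lam⁻¹ + bbar t * ‖x‖ ^ ((d : ℝ) + 2 * α))
        - lam * (lam⁻¹ + bbar t * ‖x‖ ^ ((d : ℝ) + 2 * α))
        + abar * φ₁ x ≥ 0 := by
  obtain ⟨hα0, hα1⟩ := hα
  intro t ht x
  have hd' : (0:ℝ) < (d:ℝ) + 2 * α := by positivity
  have hθ0 : 0 < 2 * α / ((d : ℝ) + 2 * α) := by positivity
  have hb : 0 < bbar t := hbpos t ht
  have hder : deriv bbar t
      = -(M * (bbar t) ^ (2 * α / ((d : ℝ) + 2 * α) + 1)) - lam * bbar t :=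
    (hODE t ht).deriv
  have hsplit : (bbar t) ^ (2 * α / ((d : ℝ) + 2 * α) + 1)
      = (bbar t) ^ (2 * α / ((d : ℝ) + 2 * α)) * bbar t := by
    rw [Real.rpow_add hb, Real.rpow_one]
  -- bound on b^θ
  have hbθ : (bbar t) ^ (2 * α / ((d : ℝ) + 2 * α))
      ≤ 2 * Bbar ^ (2 * α / ((d : ℝ) + 2 * α)) := by
    have h1 := Real.rpow_le_rpow hb.le (hbB t ht) hθ0.le
    have h2 : ((2 : ℝ) ^ (((d : ℝ) + 2 * α) / (2 * α)) * Bbar)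
        ^ (2 * α / ((d : ℝ) + 2 * α))
        = 2 * Bbar ^ (2 * α / ((d : ℝ) + 2 * α)) := by
      rw [Real.mul_rpow (by positivity) hBbar.le, ← Real.rpow_mul (by norm_num)]
      have he : ((d : ℝ) + 2 * α) / (2 * α) * (2 * α / ((d : ℝ) + 2 * α)) = 1 := by
        field_simp
      rw [he, Real.rpow_one]
    rw [h2] at h1
    exact h1
  have hbθpos : 0 < (bbar t) ^ (2 * α / ((d : ℝ) + 2 * α)) :=
    Real.rpow_pos_of_pos hb _
  -- abar bound
  have habar' : abar * m ≥ 1 + 2 * Bbar ^ (2 * α / ((d : ℝ) + 2 * α)) * M * lam⁻¹ := by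
    have := mul_le_mul_of_nonneg_right habar hm.le
    calc 1 + 2 * Bbar ^ (2 * α / ((d : ℝ) + 2 * α)) * M * lam⁻¹
        = m⁻¹ * (1 + 2 * Bbar ^ (2 * α / ((d : ℝ) + 2 * α)) * M * lam⁻¹) * m := by
          field_simp
      _ ≤ abar * m := this
  have habarpos : 0 < abar := by
    have h1 : 0 < 1 + 2 * Bbar ^ (2 * α / ((d : ℝ) + 2 * α)) * M * lam⁻¹ := by
      positivity
    nlinarith [mul_pos (inv_pos.mpr hm) h1]
  have hφx := hφ x
  have hr : (0:ℝ) ≤ ‖x‖ ^ ((d : ℝ) + 2 * α) := Real.rpow_nonneg (norm_nonneg x) _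
  have hll : lam * lam⁻¹ = 1 := mul_inv_cancel₀ hlam.ne'
  rw [hder, hsplit]
  have key : abar * φ₁ x ≥ abar * m := by
    exact mul_le_mul_of_nonneg_left hφx habarpos.le
  have hbound : M * (bbar t) ^ (2 * α / ((d : ℝ) + 2 * α)) * lam⁻¹
      ≤ M * (2 * Bbar ^ (2 * α / ((d : ℝ) + 2 * α))) * lam⁻¹ := by
    have := mul_le_mul_of_nonneg_left hbθ hM.le
    exact mul_le_mul_of_nonneg_right this (inv_pos.mpr hlam).le
  nlinarith [key, habar', hbound, hll]
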